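/- arXiv:1404.6945 — 5 statements merged into one kernel-verified Lean document; each statement's English description precedes it below -/
import Mathlib

section
/- Let γ_B ≥ 0 and Γ_M > 0 be real numbers, and define the maximal achievable downlink rate under joint decoding as the function R_B : [0,∞) → ℝ given by R_B(γ₁) = C(γ_B/(1+γ₁)) if γ₁ < Γ_M, and R_B(γ₁) = max{ C(γ_B/(1+γ₁)), min{ C(γ_B), C(γ₁+γ_B) − C(Γ_M) } } if γ₁ ≥ Γ_M. Then the infimum of R_B(γ₁) over all γ₁ ≥ 0 equals C(γ_B/(1+Γ_M)), and this infimum is attained at γ₁ = Γ_M. -/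
/-!
Below `Γ_M` the rate `C(γ_B/(1+γ₁))` decreases towards its value at `Γ_M`. From `Γ_M` on, the
second argument of the `max` is bounded below by that value: `C(γ_B/(1+Γ_M)) ≤ C(γ_B)`, and
`C(γ₁+γ_B) − C(Γ_M)` increases in `γ₁` and equals `C(γ_B/(1+Γ_M))` at `γ₁ = Γ_M`, by the
identity `C(a+b) = C(a) + C(b/(1+a))`.
-/

/-- Shannon capacity function `C(x) = log₂(1+x)`. -/
noncomputable def C (x : ℝ) : ℝ := Real.logb 2 (1 + x)

lemma C_le_C {x y : ℝ} (hx : -1 < x) (hxy : x ≤ y) : C x ≤ C y :=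
  Real.logb_le_logb_of_le one_lt_two (by linarith) (by linarith)

lemma C_add_sub_C {a b : ℝ} (ha : 1 + a ≠ 0) (hab : 1 + (a + b) ≠ 0) :
    C (a + b) - C a = C (b / (1 + a)) := by
  have h : 1 + b / (1 + a) = (1 + (a + b)) / (1 + a) := by
    field_simp
    ring
  rw [C, C, C, h, Real.logb_div hab ha]

lemma C_div_one_add_le {γ x y : ℝ} (hγ : 0 ≤ γ) (hx : 0 ≤ x) (hxy : x ≤ y) :
    C (γ / (1 + y)) ≤ C (γ / (1 + x)) := by
  have hpos : 0 ≤ γ / (1 + y) := div_nonneg hγ (by linarith)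
  exact C_le_C (by linarith) (div_le_div_of_nonneg_left hγ (by linarith) (by linarith))

lemma C_div_one_add_le_C {γ x : ℝ} (hγ : 0 ≤ γ) (hx : 0 ≤ x) : C (γ / (1 + x)) ≤ C γ := by
  simpa using C_div_one_add_le hγ le_rfl hx

/-- For `γ_B ≥ 0`, `Γ_M > 0`, the maximal achievable downlink rate under joint decoding
`R_B(γ₁)` (treating the MTD as noise when `γ₁ < Γ_M`, using the MAC region otherwise)
has infimum over `γ₁ ≥ 0` equal to `C(γ_B/(1+Γ_M))`, attained at `γ₁ = Γ_M`. -/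
theorem stmt_0 (γB ΓM : ℝ) (hγB : 0 ≤ γB) (hΓM : 0 < ΓM)
    (RB : ℝ → ℝ)
    (hRB : ∀ γ₁, 0 ≤ γ₁ →
      RB γ₁ = if γ₁ < ΓM then C (γB / (1 + γ₁))
        else max (C (γB / (1 + γ₁))) (min (C γB) (C (γ₁ + γB) - C ΓM))) :
    IsLeast (RB '' {γ₁ : ℝ | 0 ≤ γ₁}) (C (γB / (1 + ΓM))) ∧
      RB ΓM = C (γB / (1 + ΓM)) := by
  have hsum : C (ΓM + γB) - C ΓM = C (γB / (1 + ΓM)) :=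
    C_add_sub_C (by linarith) (by linarith)
  have hval : RB ΓM = C (γB / (1 + ΓM)) := by
    rw [hRB ΓM hΓM.le, if_neg (lt_irrefl ΓM), hsum,
      min_eq_right (C_div_one_add_le_C hγB hΓM.le), max_self]
  refine ⟨⟨⟨ΓM, hΓM.le, hval⟩, ?_⟩, hval⟩
  rintro _ ⟨γ₁, hγ₁ : 0 ≤ γ₁, rfl⟩
  rw [hRB γ₁ hγ₁]
  split_ifs with hlt
  · exact C_div_one_add_le hγB hγ₁ hlt.le
  · have hge : ΓM ≤ γ₁ := not_lt.mp hlt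
    refine le_max_of_le_right (le_min (C_div_one_add_le_C hγB hΓM.le) ?_)
    rw [← hsum]
    linarith [C_le_C (x := ΓM + γB) (y := γ₁ + γB) (by linarith) (by linarith)]
end

section
/- Let γ_B ≥ 0 and Γ_M > 0 be real numbers. For every γ₁ ≥ Γ_M, one has max{ C(γ_B/(1+γ₁)), min{ C(γ_B), C(γ₁+γ_B) − C(Γ_M) } } = min{ C(γ_B), C(γ₁+γ_B) − C(Γ_M) }; that is, when the interferer's SNR is at least Γ_M, joint decoding is never worse than treating the interfering signal as noise. -/
/-- The chain rule for the capacity: decoding `a + b` and then removing `a` leaves `b` with `a`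
as noise. -/
lemma C_div_one_add {a b : ℝ} (ha : 1 + a ≠ 0) (hab : 1 + (a + b) ≠ 0) :
    C (b / (1 + a)) = C (a + b) - C a := by
  unfold C
  rw [← Real.logb_div hab ha]
  congr 1
  field_simp
  ring

lemma C_div_one_add_le_C_s3 {a b : ℝ} (ha : 0 ≤ a) (hb : 0 ≤ b) : C (b / (1 + a)) ≤ C b := by
  apply C_le_C (by linarith [div_nonneg hb (by linarith : (0 : ℝ) ≤ 1 + a)])
  exact div_le_self hb (by linarith)

/-- For `γ_B ≥ 0`, `Γ_M > 0` and every `γ₁ ≥ Γ_M`, joint decoding is never worse than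
treating the interfering signal as noise:
`max{C(γ_B/(1+γ₁)), min{C(γ_B), C(γ₁+γ_B) − C(Γ_M)}} = min{C(γ_B), C(γ₁+γ_B) − C(Γ_M)}`. -/
theorem stmt_3 (γB ΓM : ℝ) (hγB : 0 ≤ γB) (hΓM : 0 < ΓM) :
    ∀ γ₁ : ℝ, ΓM ≤ γ₁ →
      max (C (γB / (1 + γ₁))) (min (C γB) (C (γ₁ + γB) - C ΓM)) =
        min (C γB) (C (γ₁ + γB) - C ΓM) := by
  intro γ₁ hγ₁
  have hγ₁_pos : 0 < γ₁ := hΓM.trans_le hγ₁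
  refine max_eq_right (le_min (C_div_one_add_le_C_s3 hγ₁_pos.le hγB) ?_)
  rw [C_div_one_add (by linarith) (by linarith)]
  linarith [C_le_C (by linarith) hγ₁]
end

section
/- Let N ≥ 1 be a natural number, γ_B ≥ 0 and Γ_M > 0 real numbers, and γ : Fin N → [0,∞) a vector of SNRs. For every nonempty subset S of Fin N satisfying the multiple-access decodability inequality 1 + Σ_{i∈S} γ_i ≥ (1+Γ_M)^{|S|}, it holds that (1 + γ_B + Σ_{i∈S} γ_i)/(1+Γ_M)^{|S|} ≥ 1 + γ_B/(1+Γ_M)^{N}. Equivalently, C(γ_B + Σ_{i∈S} γ_i) − |S|·C(Γ_M) ≥ C(γ_B/(1+Γ_M)^{N}). -/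
lemma one_add_div_le_add_div {s g P Q : ℝ} (hP : 0 < P) (hPQ : P ≤ Q) (hg : 0 ≤ g)
    (hs : P ≤ s) : 1 + g / Q ≤ (s + g) / P :=
  calc 1 + g / Q ≤ s / P + g / P :=
        add_le_add ((one_le_div hP).mpr hs) (div_le_div_of_nonneg_left hg hP hPQ)
    _ = (s + g) / P := by rw [add_div]

lemma C_sub_mul_C {x y : ℝ} (hx : 0 < 1 + x) (hy : 0 < 1 + y) (n : ℕ) :
    C x - n * C y = Real.logb 2 ((1 + x) / (1 + y) ^ n) := by
  rw [C, C, Real.logb_div hx.ne' (pow_ne_zero n hy.ne'), Real.logb_pow]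

theorem stmt_4_general (N : ℕ) (γB ΓM : ℝ) (hγB : 0 ≤ γB) (hΓM : 0 < ΓM)
    (γ : Fin N → ℝ) :
    ∀ S : Finset (Fin N), S.Nonempty →
      1 + ∑ i ∈ S, γ i ≥ (1 + ΓM) ^ S.card →
      (1 + γB + ∑ i ∈ S, γ i) / (1 + ΓM) ^ S.card ≥ 1 + γB / (1 + ΓM) ^ N ∧
      C (γB + ∑ i ∈ S, γ i) - (S.card : ℝ) * C ΓM ≥ C (γB / (1 + ΓM) ^ N) := by
  intro S _ hmac
  have hPS : 0 < (1 + ΓM) ^ S.card := by positivity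
  have hcard : S.card ≤ N := by simpa using S.card_le_univ
  have hratio : 1 + γB / (1 + ΓM) ^ N ≤ (1 + γB + ∑ i ∈ S, γ i) / (1 + ΓM) ^ S.card := by
    rw [add_right_comm]
    exact one_add_div_le_add_div hPS (pow_le_pow_right₀ (by linarith) hcard) hγB hmac
  refine ⟨hratio, ?_⟩
  rw [C_sub_mul_C (by linarith) (by linarith), ← add_assoc]
  exact Real.logb_le_logb_of_le one_lt_two (by positivity) hratio

/-- Achievability step: for `N ≥ 1`, `γ_B ≥ 0`, `Γ_M > 0` and nonnegative SNRs
`γ : Fin N → ℝ`, every nonempty subset `S` satisfying the MAC decodability inequality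
`1 + Σ_{i∈S} γ_i ≥ (1+Γ_M)^{|S|}` obeys
`(1 + γ_B + Σ_{i∈S} γ_i)/(1+Γ_M)^{|S|} ≥ 1 + γ_B/(1+Γ_M)^N`, equivalently
`C(γ_B + Σ_{i∈S} γ_i) − |S|·C(Γ_M) ≥ C(γ_B/(1+Γ_M)^N)`. -/
theorem stmt_4 (N : ℕ) (hN : 1 ≤ N) (γB ΓM : ℝ) (hγB : 0 ≤ γB) (hΓM : 0 < ΓM)
    (γ : Fin N → ℝ) (hγ : ∀ i, 0 ≤ γ i) :
    ∀ S : Finset (Fin N), S.Nonempty →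
      1 + ∑ i ∈ S, γ i ≥ (1 + ΓM) ^ S.card →
      (1 + γB + ∑ i ∈ S, γ i) / (1 + ΓM) ^ S.card ≥ 1 + γB / (1 + ΓM) ^ N ∧
      C (γB + ∑ i ∈ S, γ i) - (S.card : ℝ) * C ΓM ≥ C (γB / (1 + ΓM) ^ N) :=
  stmt_4_general N γB ΓM hγB hΓM γ
end

section
/- Let Γ_M > 0, let S be a finite set, let γ : S → [0,∞), and let T be a proper subset of S. Suppose that 1 + Σ_{i∈S} γ_i < (1+Γ_M)^{|S|} (the decodability inequality fails for S) while 1 + Σ_{i∈T} γ_i ≥ (1+Γ_M)^{|T|} (it holds for T). Then 1 + (Σ_{i∈S∖T} γ_i)/(1 + Σ_{i∈T} γ_i) < (1+Γ_M)^{|S|−|T|}; that is, the devices in S∖T are not jointly decodable even after the signals of the devices in T are treated as noise. -/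
/-! Writing `A = 1 + Σ_T γ` and `D = Σ_{S∖T} γ`, the failure of decodability for `S` reads
`A + D < (1+Γ)^|S| = (1+Γ)^(|S|-|T|) (1+Γ)^|T|`, and decodability of `T` gives `(1+Γ)^|T| ≤ A`;
dividing by `A` yields `1 + D/A < (1+Γ)^(|S|-|T|)`. -/

theorem one_add_div_lt_pow_sub {K : Type*} [Field K] [LinearOrder K] [IsStrictOrderedRing K]
    {c A D : K} {s t : ℕ} (hc : 0 ≤ c) (hA : 0 < A) (hts : t ≤ s)
    (hs : A + D < c ^ s) (ht : c ^ t ≤ A) :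
    1 + D / A < c ^ (s - t) := by
  rw [one_add_div hA.ne', div_lt_iff₀ hA]
  calc A + D < c ^ s := hs
    _ = c ^ (s - t) * c ^ t := by rw [← pow_add, Nat.sub_add_cancel hts]
    _ ≤ c ^ (s - t) * A := by gcongr

theorem stmt_9_general {ι : Type*} [DecidableEq ι] (ΓM : ℝ) (hΓM : 0 < ΓM)
    (S T : Finset ι) (γ : ι → ℝ) (hTS : T ⊂ S)
    (hS : 1 + ∑ i ∈ S, γ i < (1 + ΓM) ^ S.card)
    (hT : 1 + ∑ i ∈ T, γ i ≥ (1 + ΓM) ^ T.card) :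
    1 + (∑ i ∈ S \ T, γ i) / (1 + ∑ i ∈ T, γ i) < (1 + ΓM) ^ (S.card - T.card) := by
  have hT_pos : 0 < 1 + ∑ i ∈ T, γ i :=
    zero_lt_one.trans_le ((one_le_pow₀ (by linarith)).trans hT)
  have hS_split : 1 + ∑ i ∈ T, γ i + ∑ i ∈ S \ T, γ i = 1 + ∑ i ∈ S, γ i := by
    rw [← Finset.sum_sdiff hTS.subset]
    ring
  exact one_add_div_lt_pow_sub (by linarith) hT_pos (Finset.card_le_card hTS.subset)
    (hS_split ▸ hS) hT

/-- Analytic core of the minimal-undecodable-subset lemma: if the MAC decodability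
inequality fails for a finite set `S` of devices but holds for a proper subset `T ⊊ S`,
then the devices in `S∖T` are not jointly decodable after the signals of `T` are treated
as noise: `1 + (Σ_{i∈S∖T} γ_i)/(1 + Σ_{i∈T} γ_i) < (1+Γ_M)^{|S|−|T|}`. -/
theorem stmt_9 {ι : Type*} [DecidableEq ι] (ΓM : ℝ) (hΓM : 0 < ΓM)
    (S T : Finset ι) (γ : ι → ℝ) (hγ : ∀ i ∈ S, 0 ≤ γ i) (hTS : T ⊂ S)
    (hS : 1 + ∑ i ∈ S, γ i < (1 + ΓM) ^ S.card)
    (hT : 1 + ∑ i ∈ T, γ i ≥ (1 + ΓM) ^ T.card) :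
    1 + (∑ i ∈ S \ T, γ i) / (1 + ∑ i ∈ T, γ i) < (1 + ΓM) ^ (S.card - T.card) :=
  stmt_9_general ΓM hΓM S T γ hTS hS hT
end

section
/- Let γ_B > 0 and Γ_M > 0 be real numbers, and define the maximal achievable downlink rate under single-user decoding with successive interference cancellation as R_B^{SD} : [0,∞) → ℝ given by R_B^{SD}(γ₁) = C(γ_B/(1+γ₁)) if γ₁ < Γ_M·(1+γ_B), and R_B^{SD}(γ₁) = C(γ_B) if γ₁ ≥ Γ_M·(1+γ_B). Then the infimum of R_B^{SD}(γ₁) over all γ₁ ≥ 0 equals C(γ_B/(1+Γ_M·(1+γ_B))), this infimum is not attained (R_B^{SD}(γ₁) > C(γ_B/(1+Γ_M·(1+γ_B))) for every γ₁ ≥ 0), and it is the supremum of the set of downlink rates decodable for every value of γ₁ ≥ 0. -/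
open Set

lemma C_strictMonoOn : StrictMonoOn C (Ioi (-1)) := fun x hx y hy hxy =>
  Real.logb_lt_logb one_lt_two (by linarith [mem_Ioi.1 hx]) (by linarith)

lemma continuousAt_C {x : ℝ} (hx : -1 < x) : ContinuousAt C x :=
  (Real.continuousAt_logb (by linarith)).comp (continuousAt_const.add continuousAt_id)

lemma C_div_one_add_strictAntiOn {γ : ℝ} (hγ : 0 < γ) :
    StrictAntiOn (fun x => C (γ / (1 + x))) (Ioi (-1)) := by
  intro x hx y hy hxy
  have hx' : 0 < 1 + x := by linarith [mem_Ioi.1 hx]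
  refine C_strictMonoOn (mem_Ioi.2 ?_) (mem_Ioi.2 ?_) ?_
  · linarith [div_pos hγ (hx'.trans (by linarith : 1 + x < 1 + y))]
  · linarith [div_pos hγ hx']
  · exact div_lt_div_of_pos_left hγ hx' (by linarith)

lemma continuousAt_C_div_one_add {γ x : ℝ} (hγ : 0 < γ) (hx : -1 < x) :
    ContinuousAt (fun x => C (γ / (1 + x))) x :=
  have hx' : 0 < 1 + x := by linarith
  (continuousAt_C (by linarith [div_pos hγ hx'])).comp
    (continuousAt_const.div (continuousAt_const.add continuousAt_id) hx'.ne')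

lemma setOf_forall_le_eq_lowerBounds_image {α β : Type*} [Preorder β] (f : α → β) (p : α → Prop) :
    {r | ∀ x, p x → r ≤ f x} = lowerBounds (f '' {x | p x}) := by
  ext r
  simp [mem_lowerBounds]

/-- For `γ_B > 0`, `Γ_M > 0`, the maximal achievable downlink rate under single-user
decoding with successive interference cancellation `R_B^{SD}(γ₁)` has infimum over
`γ₁ ≥ 0` equal to `C(γ_B/(1+Γ_M(1+γ_B)))`; the infimum is not attained (the value is
strictly exceeded for every `γ₁ ≥ 0`), and it is the supremum of the set of downlink
rates decodable for every value of `γ₁ ≥ 0`. -/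
theorem stmt_10 (γB ΓM : ℝ) (hγB : 0 < γB) (hΓM : 0 < ΓM)
    (RBSD : ℝ → ℝ)
    (hRBSD : ∀ γ₁, 0 ≤ γ₁ →
      RBSD γ₁ = if γ₁ < ΓM * (1 + γB) then C (γB / (1 + γ₁)) else C γB) :
    IsGLB (RBSD '' {γ₁ : ℝ | 0 ≤ γ₁}) (C (γB / (1 + ΓM * (1 + γB)))) ∧
    (∀ γ₁, 0 ≤ γ₁ → RBSD γ₁ > C (γB / (1 + ΓM * (1 + γB)))) ∧
    IsLUB {r : ℝ | ∀ γ₁, 0 ≤ γ₁ → r ≤ RBSD γ₁} (C (γB / (1 + ΓM * (1 + γB)))) := by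
  set T := ΓM * (1 + γB)
  have hT : 0 < T := mul_pos hΓM (by linarith)
  have hanti := C_div_one_add_strictAntiOn hγB
  have hmem {x : ℝ} (hx : 0 ≤ x) : x ∈ Ioi (-1) := mem_Ioi.2 (by linarith)
  have hstrict : ∀ γ₁, 0 ≤ γ₁ → RBSD γ₁ > C (γB / (1 + T)) := by
    intro γ₁ hγ₁
    rw [hRBSD γ₁ hγ₁]
    split_ifs with hlt
    · exact hanti (hmem hγ₁) (hmem hT.le) hlt
    · simpa using hanti (hmem le_rfl) (hmem hT.le) hT
  have hEqOn : EqOn RBSD (fun x => C (γB / (1 + x))) (Ico 0 T) :=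
    fun x hx => (hRBSD x hx.1).trans (if_pos hx.2)
  have hclosure : C (γB / (1 + T)) ∈ closure (RBSD '' {γ₁ | 0 ≤ γ₁}) := by
    have hT_mem : T ∈ closure (Ico 0 T) := by simp [closure_Ico hT.ne, hT.le]
    have hlim := (continuousAt_C_div_one_add hγB (by linarith)).continuousWithinAt
      |>.mem_closure_image hT_mem
    rw [← hEqOn.image_eq] at hlim
    exact closure_mono (image_mono fun x hx => hx.1) hlim
  have hglb : IsGLB (RBSD '' {γ₁ | 0 ≤ γ₁}) (C (γB / (1 + T))) :=
    isGLB_of_mem_closure (by rintro _ ⟨γ₁, hγ₁, rfl⟩; exact (hstrict γ₁ hγ₁).le) hclosure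
  refine ⟨hglb, hstrict, ?_⟩
  rw [setOf_forall_le_eq_lowerBounds_image]
  exact isLUB_lowerBounds.2 hglb
end
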